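/- The Bessel kernel satisfies the pointwise bound G_s(x) ≤ C(n) · (s/(n-s)) · |x|^{-n+s} for all x ∈ ℝ^n \ {0} and 0 < s < n, with C(n) depending only on n. -/

import Mathlib

/-!
Bounding `exp (-δ / (4π))` by `1` dominates `G_s(x)` by the Riesz kernel: the substitution
`δ = 1 / t` turns the remaining integral into `Γ((n - s) / 2) (π |x|²)^((s - n) / 2)`. The
`s`-dependence of the constant then comes from `Γ(t) = Γ(t + 1) / t` and the fact that `Γ` is
bounded above and below by positive constants on the compact interval `[1, 1 + n / 2]`.
-/

open MeasureTheory Set Real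
open scoped ENNReal

/-- The Bessel potential kernel `G_s` on `ℝ^n`. -/
noncomputable def besselKernel (n : ℕ) (s : ℝ) (x : EuclideanSpace ℝ (Fin n)) : ℝ :=
  (4 * π) ^ (-(s / 2)) / Real.Gamma (s / 2) *
    ∫ δ in Ioi (0 : ℝ),
      Real.exp (-(π * ‖x‖ ^ 2) / δ) * Real.exp (-δ / (4 * π)) * δ ^ ((-(n : ℝ) + s) / 2) / δ

lemma eqOn_exp_neg_div_mul_rpow_comp_inv (a b : ℝ) :
    EqOn (fun δ : ℝ => (|(-1 : ℝ)| * δ ^ ((-1 : ℝ) - 1)) •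
        (fun t : ℝ => t ^ (-a - 1) * exp (-(b * t))) (δ ^ (-1 : ℝ)))
      (fun δ : ℝ => exp (-b / δ) * δ ^ (a - 1)) (Ioi 0) := by
  intro δ (hδ : 0 < δ)
  simp only [smul_eq_mul, abs_neg, abs_one, one_mul, rpow_neg_one δ]
  rw [inv_rpow hδ.le, ← rpow_neg hδ.le, neg_div, div_eq_mul_inv, ← mul_assoc,
    ← rpow_add hδ, mul_comm]
  congr 2
  ring

lemma integrableOn_exp_neg_div_mul_rpow {a b : ℝ} (ha : a < 0) (hb : 0 < b) :
    IntegrableOn (fun δ : ℝ => exp (-b / δ) * δ ^ (a - 1)) (Ioi 0) := by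
  have h := integrableOn_rpow_mul_exp_neg_mul_rpow (p := 1) (s := -a - 1) (by linarith) one_pos hb
  simp only [rpow_one, neg_mul] at h
  exact ((integrableOn_Ioi_comp_rpow_iff _ (p := -1) (by norm_num)).mpr h).congr_fun
    (eqOn_exp_neg_div_mul_rpow_comp_inv a b) measurableSet_Ioi

lemma integral_exp_neg_div_mul_rpow {a b : ℝ} (ha : a < 0) (hb : 0 < b) :
    ∫ δ in Ioi (0 : ℝ), exp (-b / δ) * δ ^ (a - 1) = b ^ a * Gamma (-a) := by
  rw [← setIntegral_congr_fun measurableSet_Ioi (eqOn_exp_neg_div_mul_rpow_comp_inv a b),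
    integral_comp_rpow_Ioi (fun t : ℝ => t ^ (-a - 1) * exp (-(b * t))) (by norm_num),
    integral_rpow_mul_exp_neg_mul_Ioi (by linarith) hb, one_div, inv_rpow hb.le,
    ← rpow_neg hb.le, neg_neg]

lemma besselKernel_le {n : ℕ} {s : ℝ} (hs : 0 < s) (hsn : s < n)
    {x : EuclideanSpace ℝ (Fin n)} (hx : x ≠ 0) :
    besselKernel n s x ≤ (4 * π) ^ (-(s / 2)) * π ^ ((-(n : ℝ) + s) / 2) *
      (Gamma ((n - s) / 2) / Gamma (s / 2)) * ‖x‖ ^ (-(n : ℝ) + s) := by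
  set a : ℝ := (-(n : ℝ) + s) / 2
  set b : ℝ := π * ‖x‖ ^ 2
  have ha : a < 0 := by simp only [a]; linarith
  have hb : 0 < b := by positivity
  have hdrop : ∫ δ in Ioi (0 : ℝ), exp (-b / δ) * exp (-δ / (4 * π)) * δ ^ a / δ ≤
      ∫ δ in Ioi (0 : ℝ), exp (-b / δ) * δ ^ (a - 1) := by
    refine setIntegral_mono_of_nonneg (fun δ (hδ : 0 < δ) => by positivity)
      (fun δ (hδ : 0 < δ) => ?_) (integrableOn_exp_neg_div_mul_rpow ha hb)
    have hexp : exp (-δ / (4 * π)) ≤ 1 :=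
      exp_le_one_iff.mpr (div_nonpos_of_nonpos_of_nonneg (by linarith) (by positivity))
    calc exp (-b / δ) * exp (-δ / (4 * π)) * δ ^ a / δ
        ≤ exp (-b / δ) * 1 * δ ^ a / δ := by gcongr
      _ = exp (-b / δ) * δ ^ (a - 1) := by rw [rpow_sub_one hδ.ne']; ring
  have hba : b ^ a = π ^ a * ‖x‖ ^ (-(n : ℝ) + s) := by
    rw [mul_rpow pi_pos.le (by positivity), ← rpow_natCast, ← rpow_mul (norm_nonneg x)]
    congr 2
    simp only [a]; push_cast; ring
  calc besselKernel n s x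
      ≤ (4 * π) ^ (-(s / 2)) / Gamma (s / 2) * (b ^ a * Gamma (-a)) := by
        rw [← integral_exp_neg_div_mul_rpow ha hb]
        exact mul_le_mul_of_nonneg_left hdrop (by positivity)
    _ = _ := by
        rw [hba, show -a = (n - s) / 2 by simp only [a]; ring]
        ring

lemma Real.exists_div_le_Gamma_le_div {L : ℝ} (hL : 0 ≤ L) :
    ∃ m M : ℝ, 0 < m ∧ 0 < M ∧
      ∀ t, 0 < t → t ≤ L → m / t ≤ Gamma t ∧ Gamma t ≤ M / t := by
  have hK : (Icc 1 (1 + L)).Nonempty := nonempty_Icc.mpr (by linarith)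
  have hcont : ContinuousOn Gamma (Icc 1 (1 + L)) := fun t ht =>
    (differentiableAt_Gamma fun k => by linarith [ht.1, k.cast_nonneg (α := ℝ)])
      |>.continuousAt.continuousWithinAt
  obtain ⟨tm, htm, hmin⟩ := isCompact_Icc.exists_isMinOn hK hcont
  obtain ⟨tM, htM, hmax⟩ := isCompact_Icc.exists_isMaxOn hK hcont
  refine ⟨Gamma tm, Gamma tM, Gamma_pos_of_pos (by linarith [htm.1]),
    Gamma_pos_of_pos (by linarith [htM.1]), fun t ht htL => ?_⟩
  have hshift : Gamma t = Gamma (t + 1) / t := by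
    rw [Gamma_add_one ht.ne', mul_div_cancel_left₀ _ ht.ne']
  have hmem : t + 1 ∈ Icc 1 (1 + L) := ⟨by linarith, by linarith⟩
  rw [hshift]
  exact ⟨by gcongr; exact hmin hmem, by gcongr; exact hmax hmem⟩

theorem statement7 (n : ℕ) :
    ∃ C : ℝ, 0 < C ∧ ∀ s : ℝ, 0 < s → s < n →
      ∀ x : EuclideanSpace ℝ (Fin n), x ≠ 0 →
        besselKernel n s x ≤ C * (s / (n - s)) * ‖x‖ ^ (-(n : ℝ) + s) := by
  obtain ⟨m, M, hm, hM, hΓ⟩ := Real.exists_div_le_Gamma_le_div (L := n / 2) (by positivity)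
  refine ⟨M / m, by positivity, fun s hs hsn x hx => ?_⟩
  have hπ : 1 ≤ π := by linarith [pi_gt_three]
  have h4π : (4 * π) ^ (-(s / 2)) ≤ 1 :=
    rpow_le_one_of_one_le_of_nonpos (by linarith) (by linarith)
  have hπa : π ^ ((-(n : ℝ) + s) / 2) ≤ 1 := rpow_le_one_of_one_le_of_nonpos hπ (by linarith)
  have hnum : Gamma ((n - s) / 2) ≤ M / ((n - s) / 2) := (hΓ _ (by linarith) (by linarith)).2
  have hden : m / (s / 2) ≤ Gamma (s / 2) := (hΓ _ (by linarith) (by linarith)).1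
  have hnum₀ : 0 ≤ Gamma ((n - s) / 2) := (Gamma_pos_of_pos (by linarith)).le
  calc besselKernel n s x
      ≤ (4 * π) ^ (-(s / 2)) * π ^ ((-(n : ℝ) + s) / 2) *
          (Gamma ((n - s) / 2) / Gamma (s / 2)) * ‖x‖ ^ (-(n : ℝ) + s) :=
        besselKernel_le hs hsn hx
    _ ≤ 1 * 1 * (M / ((n - s) / 2) / (m / (s / 2))) * ‖x‖ ^ (-(n : ℝ) + s) := by gcongr
    _ = M / m * (s / (n - s)) * ‖x‖ ^ (-(n : ℝ) + s) := by field_simp
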